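/- arXiv:1904.00041 — 3 statements merged into one kernel-verified Lean document; each statement's English description precedes it below -/
import Mathlib

section
/- Let X be a complex Banach space, q ≥ 2 and ρ > 0. Suppose that every one-variable X-valued polynomial f(z) = ∑_{k=0}^N x_k z^k satisfies (∑_{k=0}^N ‖x_k‖^q ρ^{qk})^{1/q} ≤ (∫_T ‖f(z)‖^q dz)^{1/q}. Then for every n ∈ ℕ, every X-valued polynomial P(z) = ∑_α x_α z^α of n variables satisfies (∑_α ‖x_α‖^q ρ^{q|α|})^{1/q} ≤ (∫_{T^n} ‖P(z)‖^q dz)^{1/q}. -/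
open MeasureTheory Finset
open scoped ENNReal NNReal

noncomputable section

instance : MeasurableSpace Circle := borel Circle
instance : BorelSpace Circle := ⟨rfl⟩

/-- The normalized Haar (probability) measure on the circle group `𝕋`. -/
def μC : Measure Circle := (Measure.haar (Set.univ : Set Circle))⁻¹ • Measure.haar

/-- The normalized Haar measure on the polytorus `𝕋ⁿ`
(the product of `n` copies of the normalized Haar measure on the circle). -/
def μT (n : ℕ) : Measure (Fin n → Circle) := Measure.pi fun _ => μC

/-! Induction on the number of variables, splitting off the first one: writing
`P(w, z') = ∑_b z'^b y_b(w)` with `y_b(w) = ∑_k w^k x_(k,b)`, the induction hypothesis applied for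
fixed `w` and integrated in `w` (Fubini) bounds `∑_b ‖y_b‖_q^q ρ^(q|b|)` by `‖P‖_q^q`, and the
one-variable inequality bounds each `∑_k ‖x_(k,b)‖^q ρ^(qk)` by `‖y_b‖_q^q`. Padding the
coefficients by zero, the multi-indices may be taken to range over a box `sⁿ`, which splits as `s × sⁿ⁻¹`. -/

instance : IsProbabilityMeasure μC := by
  constructor
  rw [μC, Measure.smul_apply, smul_eq_mul]
  exact ENNReal.inv_mul_cancel
    (IsOpen.measure_pos Measure.haar isOpen_univ Set.univ_nonempty).ne' (measure_ne_top _ _)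

theorem Fin.sum_piFinset_const_succ {α M : Type*} [AddCommMonoid M] {n : ℕ} (s : Finset α)
    (f : (Fin (n + 1) → α) → M) :
    ∑ a ∈ Fintype.piFinset (fun _ => s), f a =
      ∑ k ∈ s, ∑ b ∈ Fintype.piFinset (fun _ => s), f (Fin.cons k b) := by
  have h := Finset.filter_piFinset_eq_map_consEquiv (fun _ : Fin (n + 1) => s) (fun _ => True)
  simp only [Finset.filter_true_of_mem fun _ _ => trivial] at h
  rw [h, Finset.sum_map, Finset.sum_product]
  rfl

theorem integral_pi_eq_integral_integral_cons {α E : Type*} [MeasurableSpace α]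
    [NormedAddCommGroup E] [NormedSpace ℝ E] {n : ℕ} (μ : Measure α) [SigmaFinite μ] {F : (Fin (n + 1) → α) → E}
    (hF : Integrable F (Measure.pi fun _ => μ)) :
    ∫ z, F z ∂Measure.pi (fun _ => μ) = ∫ w, ∫ z, F (Fin.cons w z) ∂Measure.pi (fun _ => μ) ∂μ := by
  have hmp := (measurePreserving_piFinSuccAbove (fun _ : Fin (n + 1) => μ) 0).symm
  rw [← hmp.integral_comp', integral_prod]
  · simp [Fin.consEquiv]
  · exact hmp.integrable_comp_emb (MeasurableEquiv.measurableEmbedding _) |>.mpr hF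

theorem Continuous.integrable_of_compactSpace {Y E : Type*} [TopologicalSpace Y] [CompactSpace Y]
    [MeasurableSpace Y] [OpensMeasurableSpace Y] [NormedAddCommGroup E] {μ : Measure Y}
    [IsFiniteMeasure μ] {f : Y → E} (hf : Continuous f) : Integrable f μ :=
  hf.integrable_of_hasCompactSupport (HasCompactSupport.of_compactSpace f)

section

variable {X : Type*} [NormedAddCommGroup X] {n : ℕ}

def weightedCoeffSum (q ρ : ℝ) (S : Finset (Fin n → ℕ)) (x : (Fin n → ℕ) → X) : ℝ :=
  ∑ α ∈ S, ‖x α‖ ^ q * ρ ^ (q * ((∑ i, α i : ℕ) : ℝ))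

theorem weightedCoeffSum_cons {ρ : ℝ} (hρ : 0 < ρ) (q : ℝ) (s : Finset ℕ)
    (x : (Fin (n + 1) → ℕ) → X) :
    weightedCoeffSum q ρ (Fintype.piFinset fun _ => s) x =
      ∑ b ∈ Fintype.piFinset (fun _ => s),
        (∑ k ∈ s, ‖x (Fin.cons k b)‖ ^ q * ρ ^ (q * k)) * ρ ^ (q * ((∑ i, b i : ℕ) : ℝ)) := by
  simp only [weightedCoeffSum, Fin.sum_piFinset_const_succ, Fin.sum_univ_succ, Fin.cons_zero,
    Fin.cons_succ, Finset.sum_mul]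
  rw [Finset.sum_comm]
  refine Finset.sum_congr rfl fun b _ => Finset.sum_congr rfl fun k _ => ?_
  push_cast
  rw [mul_add, Real.rpow_add hρ, mul_assoc]

variable [NormedSpace ℂ X]

def torusPoly (S : Finset (Fin n → ℕ)) (x : (Fin n → ℕ) → X) (z : Fin n → Circle) : X :=
  ∑ α ∈ S, (∏ i, (z i : ℂ) ^ α i) • x α

theorem continuous_torusPoly (S : Finset (Fin n → ℕ)) (x : (Fin n → ℕ) → X) :
    Continuous (torusPoly S x) := by
  unfold torusPoly
  fun_prop

theorem torusPoly_cons (s : Finset ℕ) (x : (Fin (n + 1) → ℕ) → X) (w : Circle)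
    (z : Fin n → Circle) :
    torusPoly (Fintype.piFinset fun _ => s) x (Fin.cons w z) =
      torusPoly (Fintype.piFinset fun _ => s)
        (fun b => ∑ k ∈ s, ((w : ℂ) ^ k) • x (Fin.cons k b)) z := by
  simp only [torusPoly, Fin.sum_piFinset_const_succ, Fin.prod_univ_succ, Fin.cons_zero,
    Fin.cons_succ, Finset.smul_sum, smul_smul]
  rw [Finset.sum_comm]
  simp_rw [mul_comm]

theorem weightedCoeffSum_le_integral_torusPoly_piFinset {q ρ : ℝ} (hq : 0 ≤ q) (hρ : 0 < ρ)
    (μ : Measure Circle) [IsFiniteMeasure μ] (s : Finset ℕ)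
    (h1 : ∀ x : ℕ → X,
      ∑ k ∈ s, ‖x k‖ ^ q * ρ ^ (q * k) ≤ ∫ w, ‖∑ k ∈ s, ((w : ℂ) ^ k) • x k‖ ^ q ∂μ)
    (n : ℕ) (x : (Fin n → ℕ) → X) :
    weightedCoeffSum q ρ (Fintype.piFinset fun _ => s) x ≤
      ∫ z, ‖torusPoly (Fintype.piFinset fun _ => s) x z‖ ^ q ∂Measure.pi fun _ => μ := by
  induction n with
  | zero => simp [weightedCoeffSum, torusPoly, Measure.pi_of_empty (fun _ : Fin 0 => μ)]
  | succ n ih =>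
    set y : (Fin n → ℕ) → Circle → X := fun b w => ∑ k ∈ s, ((w : ℂ) ^ k) • x (Fin.cons k b)
    have hy : ∀ b, Continuous (y b) := fun b => by fun_prop
    have hP : Continuous fun p : Circle × (Fin n → Circle) =>
        ‖torusPoly (Fintype.piFinset fun _ => s) (fun b => y b p.1) p.2‖ ^ q := by
      simp_rw [y, ← torusPoly_cons]
      exact ((continuous_torusPoly _ x).comp (by fun_prop)).norm.rpow_const fun _ => Or.inr hq
    rw [weightedCoeffSum_cons hρ, integral_pi_eq_integral_integral_cons μ
      ((continuous_torusPoly _ x).norm.rpow_const fun _ => Or.inr hq).integrable_of_compactSpace]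
    simp_rw [torusPoly_cons]
    calc _ ≤ ∑ b ∈ Fintype.piFinset (fun _ => s),
            (∫ w, ‖y b w‖ ^ q ∂μ) * ρ ^ (q * ((∑ i, b i : ℕ) : ℝ)) :=
          sum_le_sum fun b _ => mul_le_mul_of_nonneg_right (h1 _) (by positivity)
      _ = ∫ w, weightedCoeffSum q ρ (Fintype.piFinset fun _ => s) (fun b => y b w) ∂μ := by
          unfold weightedCoeffSum
          rw [integral_finsetSum _ fun b _ => ?_]
          · simp_rw [integral_mul_const]
          · exact (((hy b).norm.rpow_const fun _ => Or.inr hq).mul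
              continuous_const).integrable_of_compactSpace
      _ ≤ _ := by
          refine integral_mono (Continuous.integrable_of_compactSpace ?_)
            (Continuous.integrable_of_compactSpace ?_) fun w => ih _
          · unfold weightedCoeffSum
            fun_prop
          · simpa using continuous_parametric_integral_of_continuous
              (μ := Measure.pi fun _ => μ) hP isCompact_univ

theorem weightedCoeffSum_le_integral_torusPoly_of_subset {q ρ : ℝ} (hq : 0 < q) (hρ : 0 < ρ)
    (μ : Measure Circle) [IsFiniteMeasure μ] (s : Finset ℕ)
    (h1 : ∀ x : ℕ → X,
      ∑ k ∈ s, ‖x k‖ ^ q * ρ ^ (q * k) ≤ ∫ w, ‖∑ k ∈ s, ((w : ℂ) ^ k) • x k‖ ^ q ∂μ)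
    {S : Finset (Fin n → ℕ)} (hS : S ⊆ Fintype.piFinset fun _ => s) (x : (Fin n → ℕ) → X) :
    weightedCoeffSum q ρ S x ≤ ∫ z, ‖torusPoly S x z‖ ^ q ∂Measure.pi fun _ => μ := by
  have hcoeff : weightedCoeffSum q ρ (Fintype.piFinset fun _ => s) ((S : Set _).indicator x) =
      weightedCoeffSum q ρ S x :=
    Finset.sum_indicator_subset_of_eq_zero x (fun α v => ‖v‖ ^ q * ρ ^ (q * ((∑ i, α i : ℕ) : ℝ)))
      hS fun _ => by simp [Real.zero_rpow hq.ne']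
  have hpoly : torusPoly (Fintype.piFinset fun _ => s) ((S : Set _).indicator x) = torusPoly S x :=
    funext fun z => Finset.sum_indicator_subset_of_eq_zero x
      (fun α v => (∏ i, (z i : ℂ) ^ α i) • v) hS fun _ => smul_zero _
  rw [← hcoeff, ← hpoly]
  exact weightedCoeffSum_le_integral_torusPoly_piFinset hq.le hρ μ s h1 n _

end

theorem statement13_general {X : Type*} [NormedAddCommGroup X] [NormedSpace ℂ X]
    (q ρ : ℝ) (hq : 2 ≤ q) (hρ : 0 < ρ)
    (h1 : ∀ (N : ℕ) (x : ℕ → X),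
      (∑ k ∈ Finset.range (N + 1), ‖x k‖ ^ q * ρ ^ (q * (k : ℝ))) ^ (1 / q) ≤
        (∫ z : Circle, ‖∑ k ∈ Finset.range (N + 1), ((z : ℂ) ^ k) • x k‖ ^ q ∂ μC) ^ (1 / q)) :
    ∀ (n : ℕ) (S : Finset (Fin n → ℕ)) (x : (Fin n → ℕ) → X),
      (∑ α ∈ S, ‖x α‖ ^ q * ρ ^ (q * ((∑ i, α i : ℕ) : ℝ))) ^ (1 / q) ≤
        (∫ z : Fin n → Circle,
          ‖∑ α ∈ S, (∏ i, (z i : ℂ) ^ (α i)) • x α‖ ^ q ∂ μT n) ^ (1 / q) := by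
  intro n S x
  have hq0 : 0 < q := by linarith
  obtain ⟨N, hS⟩ : ∃ N, S ⊆ Fintype.piFinset fun _ => Finset.range (N + 1) :=
    ⟨S.sup fun α => Finset.univ.sup α, fun α hα => Fintype.mem_piFinset.2 fun i =>
      Finset.mem_range_succ_iff.2 ((Finset.le_sup (Finset.mem_univ i)).trans (Finset.le_sup hα))⟩
  have h1q : ∀ y : ℕ → X, ∑ k ∈ Finset.range (N + 1), ‖y k‖ ^ q * ρ ^ (q * (k : ℝ)) ≤
      ∫ w : Circle, ‖∑ k ∈ Finset.range (N + 1), ((w : ℂ) ^ k) • y k‖ ^ q ∂μC := fun y =>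
    (Real.rpow_le_rpow_iff (by positivity) (integral_nonneg fun _ => by positivity)
      (by positivity)).mp (h1 N y)
  exact Real.rpow_le_rpow (by positivity)
    (weightedCoeffSum_le_integral_torusPoly_of_subset hq0 hρ μC _ h1q hS x) (by positivity)

/-- If every one-variable `X`-valued polynomial `f(z) = ∑_{k=0}^N x_k z^k` satisfies
`(∑_{k=0}^N ‖x_k‖^q ρ^{qk})^{1/q} ≤ (∫_𝕋 ‖f(z)‖^q dz)^{1/q}`, then every `X`-valued polynomial
`P(z) = ∑_α x_α z^α` of `n` variables satisfies
`(∑_α ‖x_α‖^q ρ^{q|α|})^{1/q} ≤ (∫_{𝕋ⁿ} ‖P(z)‖^q dz)^{1/q}`. -/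
theorem statement13 {X : Type*} [NormedAddCommGroup X] [NormedSpace ℂ X] [CompleteSpace X]
    (q ρ : ℝ) (hq : 2 ≤ q) (hρ : 0 < ρ)
    (h1 : ∀ (N : ℕ) (x : ℕ → X),
      (∑ k ∈ Finset.range (N + 1), ‖x k‖ ^ q * ρ ^ (q * (k : ℝ))) ^ (1 / q) ≤
        (∫ z : Circle, ‖∑ k ∈ Finset.range (N + 1), ((z : ℂ) ^ k) • x k‖ ^ q ∂ μC) ^ (1 / q)) :
    ∀ (n : ℕ) (S : Finset (Fin n → ℕ)) (x : (Fin n → ℕ) → X),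
      (∑ α ∈ S, ‖x α‖ ^ q * ρ ^ (q * ((∑ i, α i : ℕ) : ℝ))) ^ (1 / q) ≤
        (∫ z : Fin n → Circle,
          ‖∑ α ∈ S, (∏ i, (z i : ℂ) ^ (α i)) • x α‖ ^ q ∂ μT n) ^ (1 / q) :=
  statement13_general q ρ hq hρ h1
end
end

section
/- Let V be a vector space, n, m, k ∈ ℕ with m ≥ 1, and let (v_A)_{A ⊆ [n], |A| = m} be a family in V. Then ∑_{B ⊆ [n], |B| = k} ∑_{A_1 ⊆ B, |A_1| = 1} ∑_{A_2 ⊆ B^c, |A_2| = m−1} v_{A_1 ∪ A_2} = m · binom(n−m, k−1) · ∑_{A ⊆ [n], |A| = m} v_A, where B^c = [n] \ B. -/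
/-!
Splitting a set `A` along `B` and `Bᶜ` is a bijection between pairs `(A₁, A₂)` with `A₁ ⊆ B`,
`A₂ ⊆ Bᶜ` and sets `A` with `#(A ∩ B) = #A₁`. Hence the left-hand side is the sum of `v A` over
pairs `(B, A)` with `#B = k`, `#A = m`, `#(A ∩ B) = 1`; for fixed `A`, the same bijection counts
the admissible `B` as `m · binom(n - m, k - 1)`.
-/

open Finset

namespace Finset

variable {α M : Type*} [Fintype α] [DecidableEq α] [AddCommMonoid M]

theorem sum_powersetCard_powersetCard_compl_union (B : Finset α) (j l : ℕ) (f : Finset α → M) :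
    ∑ A₁ ∈ powersetCard j B, ∑ A₂ ∈ powersetCard l Bᶜ, f (A₁ ∪ A₂) =
      ∑ A ∈ powersetCard (j + l) univ with #(A ∩ B) = j, f A := by
  have split : ∀ A₁ ⊆ B, ∀ A₂ ⊆ Bᶜ, (A₁ ∪ A₂) ∩ B = A₁ ∧ (A₁ ∪ A₂) \ B = A₂ := by
    intro A₁ h₁ A₂ h₂
    constructor <;> ext x <;> grind [mem_compl]
  rw [← sum_product']
  refine sum_nbij' (fun p ↦ p.1 ∪ p.2) (fun A ↦ (A ∩ B, A \ B)) ?_ ?_ ?_ ?_ (fun _ _ ↦ rfl)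
  · rintro ⟨A₁, A₂⟩ hp
    simp only [mem_product, mem_powersetCard] at hp
    obtain ⟨⟨h₁B, h₁⟩, h₂B, h₂⟩ := hp
    have hd : Disjoint A₁ A₂ :=
      disjoint_of_subset_left h₁B (disjoint_of_subset_right h₂B disjoint_compl_right)
    simp [card_union_of_disjoint hd, h₁, h₂, (split A₁ h₁B A₂ h₂B).1]
  · intro A hA
    simp only [mem_filter, mem_powersetCard, subset_univ, true_and] at hA
    simp only [mem_product, mem_powersetCard, inter_subset_right, hA.2, true_and]
    refine ⟨by rw [sdiff_eq_inter_compl]; exact inter_subset_right, ?_⟩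
    rw [card_sdiff, inter_comm, hA.2, hA.1]
    omega
  · rintro ⟨A₁, A₂⟩ hp
    simp only [mem_product, mem_powersetCard] at hp
    simp only [split A₁ hp.1.1 A₂ hp.2.1]
  · intro A _
    exact sup_inf_sdiff A B

theorem card_powersetCard_filter_card_inter_eq (A : Finset α) {j k : ℕ} (hjk : j ≤ k) :
    #{B ∈ powersetCard k univ | #(B ∩ A) = j} =
      (#A).choose j * (Fintype.card α - #A).choose (k - j) := by
  have count := sum_powersetCard_powersetCard_compl_union A j (k - j) (fun _ ↦ 1)
  rw [Nat.add_sub_cancel' hjk] at count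
  simp only [sum_const, card_powersetCard, card_compl, smul_eq_mul, mul_one] at count
  rw [← count, card_eq_sum_ones]

theorem sum_powersetCard_univ_powersetCard_powersetCard_compl_union {j k : ℕ} (hjk : j ≤ k)
    (l : ℕ) (f : Finset α → M) :
    ∑ B ∈ powersetCard k univ, ∑ A₁ ∈ powersetCard j B, ∑ A₂ ∈ powersetCard l Bᶜ, f (A₁ ∪ A₂) =
      ((j + l).choose j * (Fintype.card α - (j + l)).choose (k - j)) •
        ∑ A ∈ powersetCard (j + l) univ, f A := by
  simp_rw [sum_powersetCard_powersetCard_compl_union, sum_filter, smul_sum]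
  rw [sum_comm]
  refine sum_congr rfl fun A hA ↦ ?_
  rw [mem_powersetCard_univ] at hA
  rw [← hA, ← card_powersetCard_filter_card_inter_eq A hjk, card_eq_sum_ones, sum_smul, one_smul,
    sum_filter]
  simp_rw [inter_comm]

end Finset

theorem statement15_general {V : Type*} [AddCommGroup V]
    (n m k : ℕ) (hm : 1 ≤ m) (hk : 1 ≤ k) (v : Finset (Fin n) → V) :
    ∑ B ∈ Finset.powersetCard k (Finset.univ : Finset (Fin n)),
      ∑ A1 ∈ Finset.powersetCard 1 B,
        ∑ A2 ∈ Finset.powersetCard (m - 1) Bᶜ, v (A1 ∪ A2) =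
      (m * Nat.choose (n - m) (k - 1)) •
        ∑ A ∈ Finset.powersetCard m (Finset.univ : Finset (Fin n)), v A := by
  rw [sum_powersetCard_univ_powersetCard_powersetCard_compl_union hk, Nat.add_sub_cancel' hm,
    Nat.choose_one_right, Fintype.card_fin]

/-- The combinatorial identity
`∑_{B ⊆ [n], |B| = k} ∑_{A₁ ⊆ B, |A₁| = 1} ∑_{A₂ ⊆ Bᶜ, |A₂| = m−1} v_{A₁ ∪ A₂}
  = m · binom(n−m, k−1) · ∑_{A ⊆ [n], |A| = m} v_A`
for a family `v` in a vector space `V`, with `m, k ≥ 1`. -/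
theorem statement15 {V : Type*} [AddCommGroup V] [Module ℝ V]
    (n m k : ℕ) (hm : 1 ≤ m) (hk : 1 ≤ k) (v : Finset (Fin n) → V) :
    ∑ B ∈ Finset.powersetCard k (Finset.univ : Finset (Fin n)),
      ∑ A1 ∈ Finset.powersetCard 1 B,
        ∑ A2 ∈ Finset.powersetCard (m - 1) Bᶜ, v (A1 ∪ A2) =
      (m * Nat.choose (n - m) (k - 1)) •
        ∑ A ∈ Finset.powersetCard m (Finset.univ : Finset (Fin n)), v A :=
  statement15_general n m k hm hk v
end

section
/- For every complex Banach space X there is a constant B > 0 such that for every 1 ≤ q < ∞, every m, n ∈ ℕ, every 0 ≤ k ≤ m, and every family { x_A : A ⊆ [n], |A| ≤ m } in X, one has (E ‖∑_{A ⊆ [n], |A| = k} x_A ε_A‖^q)^{1/q} ≤ B^m (E ‖∑_{A ⊆ [n], |A| ≤ m} x_A ε_A‖^q)^{1/q}, where the expectation is over uniformly random ε ∈ {−1,1}^n. -/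
open MeasureTheory Finset
open scoped ENNReal NNReal

noncomputable section

/-- The Walsh character `ε_A = ∏_{i ∈ A} ε_i` of a sign vector `ε ∈ {-1,1}ⁿ`
(encoded by `ε : Fin n → Bool`, `true ↦ 1`, `false ↦ -1`). -/
def walshChar {n : ℕ} (ε : Fin n → Bool) (A : Finset (Fin n)) : ℂ :=
  ∏ i ∈ A, (if ε i then (1 : ℂ) else -1)

/-- The expectation of a function of a uniformly random sign vector `ε ∈ {-1,1}ⁿ`. -/
def walshExp (n : ℕ) (g : (Fin n → Bool) → ℝ) : ℝ :=
  (2 ^ n : ℝ)⁻¹ * ∑ ε : Fin n → Bool, g ε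

/-!
For `|r| ≤ 1` the noise operator `T_r`, which averages `P (δ ε)` over a random sign vector `δ`
with independent coordinates of mean `r`, is a convex combination of translates of `P`, hence an
`L^q` contraction, and it multiplies `x_A` by `r ^ |A|`. Lagrange interpolation at the nodes
`v_j = j / m` gives coefficients with `∑_j c_j v_j ^ l = δ_{lk}` for `l ≤ m`, so that
`P_k = ∑_j c_j T_{v_j} P` and `‖P_k‖_q ≤ ∑_j |c_j| ‖P‖_q`. Finally
`|c_j| ≤ 2 ^ m m ^ m / (j! (m - j)!) ≤ 6 ^ m (m choose j)`, whence `∑_j |c_j| ≤ 12 ^ m`.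
-/

section WalshNorm

variable {n : ℕ} {X : Type*} [NormedAddCommGroup X] {q : ℝ}

lemma walshExp_nonneg {f : (Fin n → Bool) → ℝ} (h : ∀ ε, 0 ≤ f ε) : 0 ≤ walshExp n f :=
  mul_nonneg (by positivity) (sum_nonneg fun ε _ => h ε)

lemma walshExp_const_mul (a : ℝ) (f : (Fin n → Bool) → ℝ) :
    walshExp n (fun ε => a * f ε) = a * walshExp n f := by
  simp only [walshExp, ← mul_sum]
  ring

lemma walshExp_comp_perm (σ : Equiv.Perm (Fin n → Bool)) (f : (Fin n → Bool) → ℝ) :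
    walshExp n (f ∘ σ) = walshExp n f := by
  simp only [walshExp, Function.comp_apply, Equiv.sum_comp σ f]

def walshNorm (q : ℝ) (f : (Fin n → Bool) → X) : ℝ :=
  (walshExp n fun ε => ‖f ε‖ ^ q) ^ (1 / q)

lemma walshNorm_nonneg (f : (Fin n → Bool) → X) : 0 ≤ walshNorm q f :=
  Real.rpow_nonneg (walshExp_nonneg fun _ => by positivity) _

lemma walshNorm_zero (hq : 0 < q) : walshNorm q (0 : (Fin n → Bool) → X) = 0 := by
  simp [walshNorm, walshExp, Real.zero_rpow hq.ne', hq.ne']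

lemma walshNorm_comp_perm (σ : Equiv.Perm (Fin n → Bool)) (f : (Fin n → Bool) → X) :
    walshNorm q (f ∘ σ) = walshNorm q f := by
  simp only [walshNorm]
  exact congrArg (· ^ (1 / q)) (walshExp_comp_perm σ fun ε => ‖f ε‖ ^ q)

lemma walshNorm_smul {𝕜 : Type*} [NormedField 𝕜] [NormedSpace 𝕜 X] (hq : 0 < q) (a : 𝕜)
    (f : (Fin n → Bool) → X) : walshNorm q (fun ε => a • f ε) = ‖a‖ * walshNorm q f := by
  have hE : 0 ≤ walshExp n fun ε => ‖f ε‖ ^ q := walshExp_nonneg fun _ => by positivity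
  simp only [walshNorm, norm_smul, Real.mul_rpow (norm_nonneg a) (norm_nonneg _),
    walshExp_const_mul]
  rw [Real.mul_rpow (by positivity) hE, ← Real.rpow_mul (norm_nonneg a),
    mul_one_div_cancel hq.ne', Real.rpow_one]

lemma walshNorm_add_le (hq : 1 ≤ q) (f g : (Fin n → Bool) → X) :
    walshNorm q (f + g) ≤ walshNorm q f + walshNorm q g := by
  have hq0 : 0 < q := by linarith
  have hc : (0 : ℝ) ≤ (2 ^ n)⁻¹ := by positivity
  have hsum : ∀ h : (Fin n → Bool) → X,
      walshNorm q h = ((2 ^ n : ℝ)⁻¹) ^ (1 / q) * (∑ ε, ‖h ε‖ ^ q) ^ (1 / q) := fun h =>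
    Real.mul_rpow hc (sum_nonneg fun _ _ => by positivity)
  rw [hsum, hsum, hsum, ← mul_add]
  gcongr
  calc (∑ ε, ‖(f + g) ε‖ ^ q) ^ (1 / q) ≤ (∑ ε, (‖f ε‖ + ‖g ε‖) ^ q) ^ (1 / q) := by
        gcongr with ε
        exact norm_add_le _ _
    _ ≤ _ := Real.Lp_add_le_of_nonneg _ hq (fun _ _ => norm_nonneg _) fun _ _ => norm_nonneg _

lemma walshNorm_sum_le {ι : Type*} (hq : 1 ≤ q) (s : Finset ι) (F : ι → (Fin n → Bool) → X) :
    walshNorm q (fun ε => ∑ t ∈ s, F t ε) ≤ ∑ t ∈ s, walshNorm q (F t) := by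
  classical
  induction s using Finset.induction with
  | empty => exact (walshNorm_zero (by linarith)).le
  | insert t s ht ih =>
    simp only [sum_insert ht]
    exact (walshNorm_add_le hq (F t) _).trans (add_le_add_right ih _)

end WalshNorm

section SignVectors

variable {n : ℕ}

/-- `==` on `Bool` is multiplication of the signs `±1`. -/
def signMul (δ : Fin n → Bool) : Equiv.Perm (Fin n → Bool) :=
  Function.Involutive.toPerm (fun ε i => δ i == ε i) fun ε => by
    funext i
    dsimp only
    cases δ i <;> cases ε i <;> rfl

lemma walshChar_signMul (δ ε : Fin n → Bool) (A : Finset (Fin n)) :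
    walshChar (signMul δ ε) A = walshChar δ A * walshChar ε A := by
  simp only [walshChar, ← prod_mul_distrib]
  refine prod_congr rfl fun i _ => ?_
  change (if (δ i == ε i) = true then _ else _) = _
  cases δ i <;> cases ε i <;> simp

/-- The law of a random sign vector with independent coordinates of mean `r`. -/
def biasedWeight (r : ℝ) (δ : Fin n → Bool) : ℝ :=
  ∏ i, if δ i then (1 + r) / 2 else (1 - r) / 2

lemma biasedWeight_nonneg {r : ℝ} (hr : |r| ≤ 1) (δ : Fin n → Bool) : 0 ≤ biasedWeight r δ := by
  rw [abs_le] at hr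
  exact prod_nonneg fun i _ => by split_ifs <;> linarith

lemma sum_prod_bool {ι M : Type*} [Fintype ι] [DecidableEq ι] [CommSemiring M]
    (g : ι → Bool → M) : ∑ δ : ι → Bool, ∏ i, g i (δ i) = ∏ i, (g i true + g i false) := by
  rw [← Fintype.prod_sum]
  simp only [Fintype.sum_bool]

lemma sum_biasedWeight (r : ℝ) : ∑ δ : Fin n → Bool, biasedWeight r δ = 1 := by
  simp only [biasedWeight]
  rw [sum_prod_bool fun _ b => if b then (1 + r) / 2 else (1 - r) / 2]
  simp [show (1 + r) / 2 + (1 - r) / 2 = 1 by ring]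

lemma sum_biasedWeight_mul_walshChar (r : ℝ) (A : Finset (Fin n)) :
    ∑ δ, (biasedWeight r δ : ℂ) * walshChar δ A = (r : ℂ) ^ A.card := by
  have hχ : ∀ δ : Fin n → Bool,
      walshChar δ A = ∏ i, if i ∈ A then (if δ i then (1 : ℂ) else -1) else 1 := fun δ =>
    (Fintype.prod_ite_mem A _).symm
  simp only [biasedWeight, hχ, Complex.ofReal_prod, ← prod_mul_distrib]
  rw [sum_prod_bool fun i b => ((if b then (1 + r) / 2 else (1 - r) / 2 : ℝ) : ℂ) *
    if i ∈ A then (if b then (1 : ℂ) else -1) else 1, ← prod_const,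
    ← Fintype.prod_ite_mem A fun _ => (r : ℂ)]
  refine Fintype.prod_congr _ _ fun i => ?_
  by_cases hi : i ∈ A <;> simp only [hi, if_true, if_false, Bool.false_eq_true] <;> push_cast <;>
    ring

end SignVectors

section NoiseOp

variable {n : ℕ} {X : Type*} [NormedAddCommGroup X] [NormedSpace ℂ X] {q : ℝ}

def noiseOp (r : ℝ) (f : (Fin n → Bool) → X) (ε : Fin n → Bool) : X :=
  ∑ δ, (biasedWeight r δ : ℂ) • f (signMul δ ε)

lemma noiseOp_walshPoly (r : ℝ) (s : Finset (Finset (Fin n))) (x : Finset (Fin n) → X)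
    (ε : Fin n → Bool) :
    noiseOp r (fun ε => ∑ A ∈ s, walshChar ε A • x A) ε =
      ∑ A ∈ s, ((r : ℂ) ^ A.card * walshChar ε A) • x A := by
  simp only [noiseOp, smul_sum, smul_smul, walshChar_signMul]
  rw [sum_comm]
  refine sum_congr rfl fun A _ => ?_
  rw [← sum_smul, ← sum_biasedWeight_mul_walshChar, sum_mul]
  exact congrArg (· • x A) (sum_congr rfl fun δ _ => by ring)

lemma walshNorm_noiseOp_le (hq : 1 ≤ q) {r : ℝ} (hr : |r| ≤ 1) (f : (Fin n → Bool) → X) :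
    walshNorm q (noiseOp r f) ≤ walshNorm q f :=
  calc walshNorm q (noiseOp r f)
      ≤ ∑ δ, walshNorm q (fun ε => (biasedWeight r δ : ℂ) • f (signMul δ ε)) :=
        walshNorm_sum_le hq _ _
    _ = ∑ δ, biasedWeight r δ * walshNorm q f := by
        refine sum_congr rfl fun δ _ => ?_
        rw [walshNorm_smul (by linarith), Complex.norm_real,
          Real.norm_of_nonneg (biasedWeight_nonneg hr δ)]
        exact congrArg _ (walshNorm_comp_perm (signMul δ) f)
    _ = walshNorm q f := by rw [← sum_mul, sum_biasedWeight, one_mul]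

lemma homogeneousPart_eq_sum_noiseOp {ι : Type*} {m k : ℕ} (hk : k ≤ m) {J : Finset ι}
    {v c : ι → ℝ} (hvc : ∀ l ≤ m, ∑ j ∈ J, c j * v j ^ l = if l = k then 1 else 0)
    (x : Finset (Fin n) → X) (ε : Fin n → Bool) :
    ∑ A ∈ univ.filter (·.card = k), walshChar ε A • x A =
      ∑ j ∈ J, (c j : ℂ) •
        noiseOp (v j) (fun ε => ∑ A ∈ univ.filter (·.card ≤ m), walshChar ε A • x A) ε := by
  have hcoef : ∀ A ∈ univ.filter (·.card ≤ m),
      ∑ j ∈ J, (c j : ℂ) * ((v j : ℂ) ^ A.card * walshChar ε A) =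
        if A.card = k then walshChar ε A else 0 := by
    intro A hA
    have hmoment : ∑ j ∈ J, (c j : ℂ) * (v j : ℂ) ^ A.card = if A.card = k then 1 else 0 := by
      have := congrArg Complex.ofReal (hvc A.card (mem_filter.mp hA).2)
      push_cast at this
      rw [this]
      split_ifs <;> simp
    simp only [← mul_assoc, ← sum_mul, hmoment, ite_mul, one_mul, zero_mul]
  simp only [noiseOp_walshPoly, smul_sum, smul_smul]
  rw [sum_comm]
  simp only [← sum_smul]
  rw [sum_congr rfl fun A hA => congrArg (· • x A) (hcoef A hA)]
  simp only [ite_smul, zero_smul]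
  rw [← sum_filter, filter_filter]
  refine sum_congr (filter_congr fun A _ => ?_) fun _ _ => rfl
  exact ⟨fun h => ⟨h ▸ hk, h⟩, And.right⟩

lemma walshNorm_homogeneousPart_le {ι : Type*} {m k : ℕ} (hk : k ≤ m) (hq : 1 ≤ q)
    {J : Finset ι} {v c : ι → ℝ} (hv : ∀ j ∈ J, |v j| ≤ 1)
    (hvc : ∀ l ≤ m, ∑ j ∈ J, c j * v j ^ l = if l = k then 1 else 0)
    (x : Finset (Fin n) → X) :
    walshNorm q (fun ε => ∑ A ∈ univ.filter (·.card = k), walshChar ε A • x A) ≤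
      (∑ j ∈ J, |c j|) *
        walshNorm q (fun ε => ∑ A ∈ univ.filter (·.card ≤ m), walshChar ε A • x A) := by
  set P := fun ε => ∑ A ∈ univ.filter (·.card ≤ m), walshChar ε A • x A
  simp only [homogeneousPart_eq_sum_noiseOp hk hvc x]
  calc _ ≤ ∑ j ∈ J, walshNorm q (fun ε => (c j : ℂ) • noiseOp (v j) P ε) :=
        walshNorm_sum_le hq _ _
    _ ≤ ∑ j ∈ J, |c j| * walshNorm q P := by
        refine sum_le_sum fun j hj => ?_
        rw [walshNorm_smul (by linarith), Complex.norm_real, Real.norm_eq_abs]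
        exact mul_le_mul_of_nonneg_left (walshNorm_noiseOp_le hq (hv j hj) P) (abs_nonneg _)
    _ = _ := by rw [sum_mul]

end NoiseOp

section Extraction

open Polynomial
open scoped Nat

lemma Lagrange.coeff_eq_sum_coeff_basis_mul_eval {F ι : Type*} [Field F] [DecidableEq ι]
    {s : Finset ι} {v : ι → F} (hvs : Set.InjOn v s) {p : F[X]} (hp : p.degree < #s) (k : ℕ) :
    p.coeff k = ∑ j ∈ s, (Lagrange.basis s v j).coeff k * p.eval (v j) := by
  conv_lhs => rw [Lagrange.eq_interpolate hvs hp]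
  simp only [Lagrange.interpolate_apply, finsetSum_coeff, coeff_C_mul]
  exact sum_congr rfl fun _ _ => mul_comm _ _

lemma abs_coeff_prod_X_sub_C_le {ι : Type*} [DecidableEq ι] (s : Finset ι) {a : ι → ℝ}
    (ha : ∀ i ∈ s, |a i| ≤ 1) (k : ℕ) : |(∏ i ∈ s, (X - C (a i))).coeff k| ≤ 2 ^ #s := by
  induction s using Finset.induction generalizing k with
  | empty => rw [prod_empty, coeff_one]; split_ifs <;> simp
  | insert i s hi ih =>
    have ih' := ih (fun j hj => ha j (mem_insert_of_mem hj))
    set p := ∏ j ∈ s, (X - C (a j))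
    have hXp : |(X * p).coeff k| ≤ 2 ^ #s := by
      cases k with
      | zero => simp
      | succ k => rw [coeff_X_mul]; exact ih' k
    have hap : |a i * p.coeff k| ≤ 2 ^ #s := by
      rw [abs_mul]
      exact (mul_le_of_le_one_left (abs_nonneg _) (ha i (mem_insert_self i s))).trans (ih' k)
    rw [prod_insert hi, card_insert_of_notMem hi, sub_mul, coeff_sub, coeff_C_mul, pow_succ]
    linarith [abs_sub ((X * p).coeff k) (a i * p.coeff k)]

lemma abs_coeff_basis_le {ι : Type*} [DecidableEq ι] {s : Finset ι} {v : ι → ℝ}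
    (hv : ∀ i ∈ s, |v i| ≤ 1) (j : ι) (k : ℕ) :
    |(Lagrange.basis s v j).coeff k| ≤ 2 ^ #(s.erase j) / ∏ i ∈ s.erase j, |v j - v i| := by
  have hbasis : Lagrange.basis s v j =
      C (∏ i ∈ s.erase j, (v j - v i)⁻¹) * ∏ i ∈ s.erase j, (X - C (v i)) := by
    simp only [Lagrange.basis, Lagrange.basisDivisor, prod_mul_distrib, map_prod]
  rw [hbasis, coeff_C_mul, abs_mul, abs_prod, div_eq_inv_mul, ← prod_inv_distrib]
  simp only [abs_inv]
  exact mul_le_mul_of_nonneg_left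
    (abs_coeff_prod_X_sub_C_le _ (fun i hi => hv i (mem_of_mem_erase hi)) k) (by positivity)

lemma prod_erase_range_abs_sub {m j : ℕ} (hj : j ≤ m) :
    ∏ i ∈ (range (m + 1)).erase j, |(j : ℝ) - i| = j ! * (m - j)! := by
  induction m, hj using Nat.le_induction with
  | base =>
    rw [range_add_one, erase_insert notMem_range_self, Nat.sub_self, Nat.factorial_zero,
      Nat.cast_one, mul_one, ← Nat.descFactorial_self, Nat.descFactorial_eq_prod_range,
      Nat.cast_prod]
    refine prod_congr rfl fun i hi => ?_
    rw [Nat.cast_sub (mem_range.mp hi).le, abs_of_nonneg (sub_nonneg.mpr ?_)]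
    exact_mod_cast (mem_range.mp hi).le
  | succ m hjm ih =>
    have hjm' : (j : ℝ) ≤ m := by exact_mod_cast hjm
    rw [range_add_one, erase_insert_of_ne (by omega), prod_insert (by simp), ih,
      Nat.sub_add_comm hjm, Nat.factorial_succ, abs_sub_comm,
      abs_of_nonneg (by push_cast; linarith)]
    push_cast [Nat.cast_sub hjm]
    ring

lemma pow_div_factorial_le_three_pow (m : ℕ) : (m : ℝ) ^ m / m ! ≤ 3 ^ m := by
  refine (Real.pow_div_factorial_le_exp _ (Nat.cast_nonneg m) m).trans ?_
  rw [← Real.exp_one_pow]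
  exact pow_le_pow_left₀ (Real.exp_pos 1).le (Real.exp_one_lt_d9.le.trans (by norm_num)) m

theorem exists_coeff_extraction (m k : ℕ) :
    ∃ v c : ℕ → ℝ, (∀ j ∈ range (m + 1), |v j| ≤ 1) ∧
      (∀ l ≤ m, ∑ j ∈ range (m + 1), c j * v j ^ l = if l = k then 1 else 0) ∧
      ∑ j ∈ range (m + 1), |c j| ≤ 12 ^ m := by
  set v : ℕ → ℝ := fun j => j / m
  set c : ℕ → ℝ := fun j => (Lagrange.basis (range (m + 1)) v j).coeff k
  have hv : ∀ j ∈ range (m + 1), |v j| ≤ 1 := by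
    intro j hj
    have hjm : (j : ℝ) ≤ m := by exact_mod_cast Nat.lt_succ_iff.mp (mem_range.mp hj)
    rw [abs_of_nonneg (by positivity)]
    exact div_le_one_of_le₀ hjm (Nat.cast_nonneg m)
  have hinj : Set.InjOn v (range (m + 1)) := by
    rcases Nat.eq_zero_or_pos m with rfl | hm
    · intro a ha b hb _
      simp_all
    · intro a _ b _ hab
      exact_mod_cast (div_left_inj' (Nat.cast_ne_zero.mpr hm.ne')).mp hab
  refine ⟨v, c, hv, fun l hl => ?_, ?_⟩
  · have hdeg : (X ^ l : ℝ[X]).degree < #(range (m + 1)) := by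
      rw [degree_X_pow, card_range]
      exact_mod_cast Nat.lt_succ_of_le hl
    have h := Lagrange.coeff_eq_sum_coeff_basis_mul_eval hinj hdeg k
    simp only [coeff_X_pow, eval_pow, eval_X] at h
    rw [if_congr eq_comm rfl rfl, h]
  · have hc : ∀ j ∈ range (m + 1), |c j| ≤ 2 ^ m * 3 ^ m * m.choose j := by
      intro j hj
      have hjm : j ≤ m := Nat.lt_succ_iff.mp (mem_range.mp hj)
      have hcard : #((range (m + 1)).erase j) = m := by simp [card_erase_of_mem hj]
      have hgap : ∏ i ∈ (range (m + 1)).erase j, |v j - v i| = j ! * (m - j)! / m ^ m := by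
        simp only [v, ← sub_div, abs_div, Nat.abs_cast, prod_div_distrib, prod_const, hcard,
          prod_erase_range_abs_sub hjm]
      have hchoose : (m : ℝ) ^ m / (j ! * (m - j)!) = m.choose j * ((m : ℝ) ^ m / m !) := by
        rw [Nat.cast_choose ℝ hjm]
        field_simp
      calc |c j| ≤ 2 ^ #((range (m + 1)).erase j) / ∏ i ∈ (range (m + 1)).erase j, |v j - v i| :=
            abs_coeff_basis_le hv j k
        _ = 2 ^ m / (j ! * (m - j)! / m ^ m) := by rw [hcard, hgap]
        _ = 2 ^ m * (m.choose j * ((m : ℝ) ^ m / m !)) := by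
            rw [← hchoose, div_div_eq_mul_div, mul_div_assoc]
        _ ≤ 2 ^ m * (m.choose j * 3 ^ m) := by gcongr; exact pow_div_factorial_le_three_pow m
        _ = 2 ^ m * 3 ^ m * m.choose j := by ring
    calc ∑ j ∈ range (m + 1), |c j| ≤ ∑ j ∈ range (m + 1), 2 ^ m * 3 ^ m * (m.choose j : ℝ) :=
          sum_le_sum hc
      _ = 12 ^ m := by
          rw [← mul_sum, ← Nat.cast_sum, Nat.sum_range_choose]
          push_cast
          rw [← mul_pow, ← mul_pow]
          norm_num

end Extraction

theorem statement18_general (X : Type*) [NormedAddCommGroup X] [NormedSpace ℂ X] :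
    ∃ B : ℝ, 0 < B ∧
      ∀ (q : ℝ), 1 ≤ q →
        ∀ (m n k : ℕ), k ≤ m →
          ∀ x : Finset (Fin n) → X,
            (walshExp n fun ε =>
                ‖∑ A ∈ Finset.univ.filter (fun A : Finset (Fin n) => A.card = k),
                  walshChar ε A • x A‖ ^ q) ^ (1 / q) ≤
              B ^ m * (walshExp n fun ε =>
                ‖∑ A ∈ Finset.univ.filter (fun A : Finset (Fin n) => A.card ≤ m),
                  walshChar ε A • x A‖ ^ q) ^ (1 / q) := by
  refine ⟨12, by norm_num, fun q hq m n k hk x => ?_⟩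
  obtain ⟨v, c, hv, hvc, hc⟩ := exists_coeff_extraction m k
  exact (walshNorm_homogeneousPart_le hk hq hv hvc x).trans
    (mul_le_mul_of_nonneg_right hc (walshNorm_nonneg _))

/-- For every Banach space `X` there is `B > 0` such that for every `1 ≤ q < ∞`, every Walsh
polynomial of degree at most `m` and every `0 ≤ k ≤ m`, the `k`-homogeneous projection satisfies
`(E‖∑_{|A|=k} x_A ε_A‖^q)^{1/q} ≤ Bᵐ (E‖∑_{|A|≤m} x_A ε_A‖^q)^{1/q}`. -/
theorem statement18 (X : Type*) [NormedAddCommGroup X] [NormedSpace ℂ X] [CompleteSpace X] :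
    ∃ B : ℝ, 0 < B ∧
      ∀ (q : ℝ), 1 ≤ q →
        ∀ (m n k : ℕ), k ≤ m →
          ∀ x : Finset (Fin n) → X,
            (walshExp n fun ε =>
                ‖∑ A ∈ Finset.univ.filter (fun A : Finset (Fin n) => A.card = k),
                  walshChar ε A • x A‖ ^ q) ^ (1 / q) ≤
              B ^ m * (walshExp n fun ε =>
                ‖∑ A ∈ Finset.univ.filter (fun A : Finset (Fin n) => A.card ≤ m),
                  walshChar ε A • x A‖ ^ q) ^ (1 / q) :=
  statement18_general X
end
end
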